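/- The quantifier-elimination rewrite relation → on formulas is locally confluent: for all formulas F₀, F₁, F₂ with F₀ → F₁ and F₀ → F₂, there exists a formula F₃ with F₁ →* F₃ and F₂ →* F₃. -/

import Mathlib

mutual
  /-- Terms of first-order logic extended with Hilbert's ε-operator,
  in de Bruijn representation (so formulas are automatically identified up
  to renaming of bound variables). -/
  inductive Tm : Type
    | var : ℕ → Tm
    | fn : ℕ → (k : ℕ) → (Fin k → Tm) → Tm
    | eps : Fm → Tm
  /-- Formulas; `ex F`, `all F` and `Tm.eps F` bind de Bruijn index 0 of `F`. -/
  inductive Fm : Type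
    | pred : ℕ → (k : ℕ) → (Fin k → Tm) → Fm
    | not : Fm → Fm
    | or : Fm → Fm → Fm
    | and : Fm → Fm → Fm
    | imp : Fm → Fm → Fm
    | ex : Fm → Fm
    | all : Fm → Fm
end

/-- Lifting a renaming under a binder. -/
def upRen (r : ℕ → ℕ) : ℕ → ℕ
  | 0 => 0
  | n + 1 => r n + 1

mutual
  /-- Renaming of free variables in a term. -/
  def renT (r : ℕ → ℕ) : Tm → Tm
    | .var i => .var (r i)
    | .fn f k a => .fn f k (fun i => renT r (a i))
    | .eps F => .eps (renF (upRen r) F)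
  /-- Renaming of free variables in a formula. -/
  def renF (r : ℕ → ℕ) : Fm → Fm
    | .pred p k a => .pred p k (fun i => renT r (a i))
    | .not F => .not (renF r F)
    | .or F G => .or (renF r F) (renF r G)
    | .and F G => .and (renF r F) (renF r G)
    | .imp F G => .imp (renF r F) (renF r G)
    | .ex F => .ex (renF (upRen r) F)
    | .all F => .all (renF (upRen r) F)
end

/-- Lifting a substitution under a binder. -/
def upSub (σ : ℕ → Tm) : ℕ → Tm
  | 0 => .var 0
  | n + 1 => renT Nat.succ (σ n)

mutual
  /-- Capture-avoiding simultaneous substitution on terms. -/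
  def subT (σ : ℕ → Tm) : Tm → Tm
    | .var i => σ i
    | .fn f k a => .fn f k (fun i => subT σ (a i))
    | .eps F => .eps (subF (upSub σ) F)
  /-- Capture-avoiding simultaneous substitution on formulas. -/
  def subF (σ : ℕ → Tm) : Fm → Fm
    | .pred p k a => .pred p k (fun i => subT σ (a i))
    | .not F => .not (subF σ F)
    | .or F G => .or (subF σ F) (subF σ G)
    | .and F G => .and (subF σ F) (subF σ G)
    | .imp F G => .imp (subF σ F) (subF σ G)
    | .ex F => .ex (subF (upSub σ) F)
    | .all F => .all (subF (upSub σ) F)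
end

/-- `inst1 F t` is `F{x ↦ t}` for the variable `x` bound just outside `F`
(de Bruijn index 0). -/
def inst1 (F : Fm) (t : Tm) : Fm :=
  subF (fun n => match n with | 0 => t | n + 1 => .var n) F

mutual
  /-- The variable with de Bruijn index `n` occurs free in the term. -/
  def freeT (n : ℕ) : Tm → Prop
    | .var i => i = n
    | .fn _ _ a => ∃ i, freeT n (a i)
    | .eps F => freeF (n + 1) F
  /-- The variable with de Bruijn index `n` occurs free in the formula. -/
  def freeF (n : ℕ) : Fm → Prop
    | .pred _ _ a => ∃ i, freeT n (a i)
    | .not F => freeF n F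
    | .or F G => freeF n F ∨ freeF n G
    | .and F G => freeF n F ∨ freeF n G
    | .imp F G => freeF n F ∨ freeF n G
    | .ex F => freeF (n + 1) F
    | .all F => freeF (n + 1) F
end

mutual
  /-- Number of occurrences of quantifiers (∃ and ∀, but not ε) in a term. -/
  def qcT : Tm → ℕ
    | .var _ => 0
    | .fn _ _ a => ∑ i, qcT (a i)
    | .eps F => qcF F
  /-- Number of occurrences of quantifiers (∃ and ∀, but not ε) in a formula. -/
  def qcF : Fm → ℕ
    | .pred _ _ a => ∑ i, qcT (a i)
    | .not F => qcF F
    | .or F G => qcF F + qcF G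
    | .and F G => qcF F + qcF G
    | .imp F G => qcF F + qcF G
    | .ex F => qcF F + 1
    | .all F => qcF F + 1
end

/-- Quantifier symbols. -/
inductive Quant : Type
  | ex
  | all

/-- `mkQ Q A` is the quantified formula `Qx. A`. -/
def mkQ : Quant → Fm → Fm
  | .ex, A => .ex A
  | .all, A => .all A

/-- `negQ Q A` is `¬^Q A`: `¬A` for `Q = ∀` and `A` for `Q = ∃`. -/
def negQ : Quant → Fm → Fm
  | .ex, A => A
  | .all, A => .not A

/-- `qeRedex Q A` is `A{x ↦ εx. ¬^Q A}`, the contractum of the redex `Qx. A`. -/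
def qeRedex (Q : Quant) (A : Fm) : Fm := inst1 A (.eps (negQ Q A))

mutual
  /-- One rewrite step inside a term, where each rewritten quantified subformula
  `Qx. A` is required to satisfy the side condition `P A`. -/
  inductive StepT (P : Fm → Prop) : Tm → Tm → Prop
    | fn {f k} {a : Fin k → Tm} {j : Fin k} {t' : Tm} :
        StepT P (a j) t' → StepT P (.fn f k a) (.fn f k (Function.update a j t'))
    | eps {F F'} : StepF P F F' → StepT P (.eps F) (.eps F')
  /-- One rewrite step on formulas: replace one occurrence of a subformula
  `Qx. A` (with `P A`) by `A{x ↦ εx. ¬^Q A}`. -/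
  inductive StepF (P : Fm → Prop) : Fm → Fm → Prop
    | root {Q A} : P A → StepF P (mkQ Q A) (qeRedex Q A)
    | pred {p k} {a : Fin k → Tm} {j : Fin k} {t' : Tm} :
        StepT P (a j) t' → StepF P (.pred p k a) (.pred p k (Function.update a j t'))
    | not {F F'} : StepF P F F' → StepF P (.not F) (.not F')
    | orL {F F' G} : StepF P F F' → StepF P (.or F G) (.or F' G)
    | orR {F G G'} : StepF P G G' → StepF P (.or F G) (.or F G')
    | andL {F F' G} : StepF P F F' → StepF P (.and F G) (.and F' G)
    | andR {F G G'} : StepF P G G' → StepF P (.and F G) (.and F G')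
    | impL {F F' G} : StepF P F F' → StepF P (.imp F G) (.imp F' G)
    | impR {F G G'} : StepF P G G' → StepF P (.imp F G) (.imp F G')
    | ex {F F'} : StepF P F F' → StepF P (.ex F) (.ex F')
    | all {F F'} : StepF P F F' → StepF P (.all F) (.all F')
end

/-- The quantifier-elimination rewrite relation `→` on formulas. -/
def Step : Fm → Fm → Prop := StepF (fun _ => True)

/-- `→₀`: the steps rewriting a vacuous quantifier (bound variable not free in the body). -/
def Step0 : Fm → Fm → Prop := StepF (fun A => ¬ freeF 0 A)

/-- `→₁`: the steps rewriting a non-vacuous quantifier. -/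
def Step1 : Fm → Fm → Prop := StepF (fun A => freeF 0 A)

/-- `→ℐ`: the innermost steps, whose rewritten subformula `Qx. A` contains no
quantifier other than the outermost `Q`. -/
def StepI : Fm → Fm → Prop := StepF (fun A => qcF A = 0)

/-! Two steps at disjoint positions commute, and two steps at the same position are the same
step, so the only critical pair is a redex `Qx. A` contracted at the root against a step
`A → A'` inside its body. It closes at `A'{x ↦ εx. ¬^Q A'}`: rewriting is stable under
substitution, so `A{x ↦ εx. ¬^Q A} → A'{x ↦ εx. ¬^Q A}`, and then every copy of the substituted
ε-term is rewritten by the same step `A → A'`; on the other side `Qx. A'` is contracted at the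
root. -/

open Relation Function

theorem upRen_comp (r s : ℕ → ℕ) : upRen r ∘ upRen s = upRen (r ∘ s) := by
  funext n; cases n <;> rfl

mutual
theorem renT_renT (r s : ℕ → ℕ) : ∀ t, renT r (renT s t) = renT (r ∘ s) t
  | .var _ => rfl
  | .fn f k a => by simp only [renT]; congr 1; funext i; exact renT_renT r s (a i)
  | .eps F => by simp only [renT]; rw [renF_renF, upRen_comp]
theorem renF_renF (r s : ℕ → ℕ) : ∀ F, renF r (renF s F) = renF (r ∘ s) F
  | .pred p k a => by simp only [renF]; congr 1; funext i; exact renT_renT r s (a i)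
  | .not F => by simp only [renF]; rw [renF_renF]
  | .or F G => by simp only [renF]; rw [renF_renF, renF_renF]
  | .and F G => by simp only [renF]; rw [renF_renF, renF_renF]
  | .imp F G => by simp only [renF]; rw [renF_renF, renF_renF]
  | .ex F => by simp only [renF]; rw [renF_renF, upRen_comp]
  | .all F => by simp only [renF]; rw [renF_renF, upRen_comp]
end

theorem upSub_comp_upRen (σ : ℕ → Tm) (r : ℕ → ℕ) :
    upSub σ ∘ upRen r = upSub (σ ∘ r) := by
  funext n; cases n <;> rfl

mutual
theorem subT_renT (σ : ℕ → Tm) (r : ℕ → ℕ) :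
    ∀ t, subT σ (renT r t) = subT (σ ∘ r) t
  | .var _ => rfl
  | .fn f k a => by simp only [renT, subT]; congr 1; funext i; exact subT_renT σ r (a i)
  | .eps F => by simp only [renT, subT]; rw [subF_renF, upSub_comp_upRen]
theorem subF_renF (σ : ℕ → Tm) (r : ℕ → ℕ) :
    ∀ F, subF σ (renF r F) = subF (σ ∘ r) F
  | .pred p k a => by simp only [renF, subF]; congr 1; funext i; exact subT_renT σ r (a i)
  | .not F => by simp only [renF, subF]; rw [subF_renF]
  | .or F G => by simp only [renF, subF]; rw [subF_renF, subF_renF]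
  | .and F G => by simp only [renF, subF]; rw [subF_renF, subF_renF]
  | .imp F G => by simp only [renF, subF]; rw [subF_renF, subF_renF]
  | .ex F => by simp only [renF, subF]; rw [subF_renF, upSub_comp_upRen]
  | .all F => by simp only [renF, subF]; rw [subF_renF, upSub_comp_upRen]
end

theorem renT_upSub (r : ℕ → ℕ) (σ : ℕ → Tm) :
    (fun n => renT (upRen r) (upSub σ n)) = upSub (fun n => renT r (σ n)) := by
  funext n; cases n with
  | zero => rfl
  | succ n =>
      show renT (upRen r) (renT Nat.succ (σ n)) = renT Nat.succ (renT r (σ n))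
      rw [renT_renT, renT_renT]; rfl

mutual
theorem renT_subT (r : ℕ → ℕ) (σ : ℕ → Tm) :
    ∀ t, renT r (subT σ t) = subT (fun n => renT r (σ n)) t
  | .var _ => rfl
  | .fn f k a => by simp only [renT, subT]; congr 1; funext i; exact renT_subT r σ (a i)
  | .eps F => by simp only [renT, subT]; rw [renF_subF, renT_upSub]
theorem renF_subF (r : ℕ → ℕ) (σ : ℕ → Tm) :
    ∀ F, renF r (subF σ F) = subF (fun n => renT r (σ n)) F
  | .pred p k a => by simp only [renF, subF]; congr 1; funext i; exact renT_subT r σ (a i)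
  | .not F => by simp only [renF, subF]; rw [renF_subF]
  | .or F G => by simp only [renF, subF]; rw [renF_subF, renF_subF]
  | .and F G => by simp only [renF, subF]; rw [renF_subF, renF_subF]
  | .imp F G => by simp only [renF, subF]; rw [renF_subF, renF_subF]
  | .ex F => by simp only [renF, subF]; rw [renF_subF, renT_upSub]
  | .all F => by simp only [renF, subF]; rw [renF_subF, renT_upSub]
end

theorem subT_upSub (τ σ : ℕ → Tm) :
    (fun n => subT (upSub τ) (upSub σ n)) = upSub (fun n => subT τ (σ n)) := by
  funext n; cases n with
  | zero => rfl
  | succ n =>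
      show subT (upSub τ) (renT Nat.succ (σ n)) = renT Nat.succ (subT τ (σ n))
      rw [subT_renT, renT_subT]; rfl

mutual
theorem subT_subT (τ σ : ℕ → Tm) :
    ∀ t, subT τ (subT σ t) = subT (fun n => subT τ (σ n)) t
  | .var _ => rfl
  | .fn f k a => by simp only [subT]; congr 1; funext i; exact subT_subT τ σ (a i)
  | .eps F => by simp only [subT]; rw [subF_subF, subT_upSub]
theorem subF_subF (τ σ : ℕ → Tm) :
    ∀ F, subF τ (subF σ F) = subF (fun n => subT τ (σ n)) F
  | .pred p k a => by simp only [subF]; congr 1; funext i; exact subT_subT τ σ (a i)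
  | .not F => by simp only [subF]; rw [subF_subF]
  | .or F G => by simp only [subF]; rw [subF_subF, subF_subF]
  | .and F G => by simp only [subF]; rw [subF_subF, subF_subF]
  | .imp F G => by simp only [subF]; rw [subF_subF, subF_subF]
  | .ex F => by simp only [subF]; rw [subF_subF, subT_upSub]
  | .all F => by simp only [subF]; rw [subF_subF, subT_upSub]
end

theorem upSub_var : upSub Tm.var = Tm.var := by
  funext n; cases n <;> rfl

mutual
theorem subT_var : ∀ t, subT Tm.var t = t
  | .var _ => rfl
  | .fn f k a => by simp only [subT]; congr 1; funext i; exact subT_var (a i)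
  | .eps F => by simp only [subT]; rw [upSub_var, subF_var]
theorem subF_var : ∀ F, subF Tm.var F = F
  | .pred p k a => by simp only [subF]; congr 1; funext i; exact subT_var (a i)
  | .not F => by simp only [subF]; rw [subF_var]
  | .or F G => by simp only [subF]; rw [subF_var, subF_var]
  | .and F G => by simp only [subF]; rw [subF_var, subF_var]
  | .imp F G => by simp only [subF]; rw [subF_var, subF_var]
  | .ex F => by simp only [subF]; rw [upSub_var, subF_var]
  | .all F => by simp only [subF]; rw [upSub_var, subF_var]
end

theorem upSub_var_comp (r : ℕ → ℕ) : upSub (Tm.var ∘ r) = Tm.var ∘ upRen r := by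
  funext n; cases n <;> rfl

mutual
theorem renT_eq_subT (r : ℕ → ℕ) : ∀ t, renT r t = subT (Tm.var ∘ r) t
  | .var _ => rfl
  | .fn f k a => by simp only [renT, subT]; congr 1; funext i; exact renT_eq_subT r (a i)
  | .eps F => by simp only [renT, subT]; rw [renF_eq_subF, upSub_var_comp]
theorem renF_eq_subF (r : ℕ → ℕ) : ∀ F, renF r F = subF (Tm.var ∘ r) F
  | .pred p k a => by simp only [renF, subF]; congr 1; funext i; exact renT_eq_subT r (a i)
  | .not F => by simp only [renF, subF]; rw [renF_eq_subF]
  | .or F G => by simp only [renF, subF]; rw [renF_eq_subF, renF_eq_subF]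
  | .and F G => by simp only [renF, subF]; rw [renF_eq_subF, renF_eq_subF]
  | .imp F G => by simp only [renF, subF]; rw [renF_eq_subF, renF_eq_subF]
  | .ex F => by simp only [renF, subF]; rw [renF_eq_subF, upSub_var_comp]
  | .all F => by simp only [renF, subF]; rw [renF_eq_subF, upSub_var_comp]
end

theorem subF_inst1 (σ : ℕ → Tm) (A : Fm) (t : Tm) :
    subF σ (inst1 A t) = inst1 (subF (upSub σ) A) (subT σ t) := by
  unfold inst1
  rw [subF_subF, subF_subF]
  congr 1; funext n
  cases n with
  | zero => rfl
  | succ n =>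
      show σ n = subT _ (renT Nat.succ (σ n))
      rw [subT_renT]; exact (subT_var _).symm

theorem subF_mkQ (σ : ℕ → Tm) (Q : Quant) (A : Fm) :
    subF σ (mkQ Q A) = mkQ Q (subF (upSub σ) A) := by
  cases Q <;> rfl

theorem subF_negQ (σ : ℕ → Tm) (Q : Quant) (A : Fm) :
    subF σ (negQ Q A) = negQ Q (subF σ A) := by
  cases Q <;> rfl

theorem subF_qeRedex (σ : ℕ → Tm) (Q : Quant) (A : Fm) :
    subF σ (qeRedex Q A) = qeRedex Q (subF (upSub σ) A) := by
  rw [qeRedex, subF_inst1, subT, subF_negQ, qeRedex]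

/-- It suffices to ask for stability under substitutions that fix the bound variable; unlike
closure under all substitutions, this also holds for the side conditions `freeF 0 A` and
`¬ freeF 0 A` of `→₁` and `→₀`. -/
def UpSubstClosed (P : Fm → Prop) : Prop :=
  ∀ σ A, P A → P (subF (upSub σ) A)

section Steps

variable {P : Fm → Prop} {α : Type} {R : α → α → Prop}

theorem StepF.congr_mkQ (Q : Quant) {A A' : Fm} (h : StepF P A A') :
    StepF P (mkQ Q A) (mkQ Q A') := by
  cases Q
  exacts [.ex h, .all h]

theorem StepF.congr_negQ (Q : Quant) {A A' : Fm} (h : StepF P A A') :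
    StepF P (negQ Q A) (negQ Q A') := by
  cases Q
  exacts [h, .not h]

theorem update_comp_apply {k : ℕ} (g : Tm → Tm) (a : Fin k → Tm) (j : Fin k) (t : Tm) :
    (fun i => g (update a j t i)) = update (fun i => g (a i)) j (g t) :=
  funext (apply_update (fun _ => g) a j t)

mutual
theorem StepT.subT (hP : UpSubstClosed P) {t t' : Tm} (h : StepT P t t') (σ : ℕ → Tm) :
    StepT P (subT σ t) (subT σ t') := by
  cases h with
  | fn hs =>
      simp only [_root_.subT]
      rw [update_comp_apply (_root_.subT σ)]
      exact .fn (hs.subT hP σ)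
  | eps hF => exact .eps (hF.subF hP (upSub σ))
theorem StepF.subF (hP : UpSubstClosed P) {F F' : Fm} (h : StepF P F F') (σ : ℕ → Tm) :
    StepF P (subF σ F) (subF σ F') := by
  cases h with
  | root hA => rw [subF_mkQ, subF_qeRedex]; exact .root (hP σ _ hA)
  | pred hs =>
      simp only [_root_.subF]
      rw [update_comp_apply (_root_.subT σ)]
      exact .pred (hs.subT hP σ)
  | not hF => exact .not (hF.subF hP σ)
  | orL hF => exact .orL (hF.subF hP σ)
  | orR hF => exact .orR (hF.subF hP σ)
  | andL hF => exact .andL (hF.subF hP σ)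
  | andR hF => exact .andR (hF.subF hP σ)
  | impL hF => exact .impL (hF.subF hP σ)
  | impR hF => exact .impR (hF.subF hP σ)
  | ex hF => exact .ex (hF.subF hP (upSub σ))
  | all hF => exact .all (hF.subF hP (upSub σ))
end

theorem StepT.renT (hP : UpSubstClosed P) {t t' : Tm} (h : StepT P t t') (r : ℕ → ℕ) :
    StepT P (renT r t) (renT r t') := by
  rw [renT_eq_subT, renT_eq_subT]
  exact h.subT hP _

theorem reflTransGen_update {k : ℕ} (C : (Fin k → Tm) → α)
    (hC : ∀ c j t, StepT P (c j) t → R (C c) (C (update c j t)))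
    (c : Fin k → Tm) (j : Fin k) {s s' : Tm} (h : ReflTransGen (StepT P) s s') :
    ReflTransGen R (C (update c j s)) (C (update c j s')) :=
  h.lift (fun s => C (update c j s)) fun x y hxy => by
    simpa using hC (update c j x) j y (by simpa using hxy)

theorem reflTransGen_of_pointwise {k : ℕ} (C : (Fin k → Tm) → α)
    (hC : ∀ c j t, StepT P (c j) t → R (C c) (C (update c j t)))
    {a b : Fin k → Tm} (h : ∀ i, ReflTransGen (StepT P) (a i) (b i)) :
    ReflTransGen R (C a) (C b) := by
  have key : ∀ s : Finset (Fin k), ReflTransGen R (C a) (C (s.piecewise b a)) := by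
    intro s
    induction s using Finset.induction_on with
    | empty => rw [Finset.piecewise_empty]
    | insert j s hj ih =>
        have hj_step := reflTransGen_update C hC (s.piecewise b a) j (h j)
        rw [← Finset.piecewise_eq_of_notMem s b a hj, update_eq_self] at hj_step
        rw [Finset.piecewise_insert]
        exact ih.trans hj_step
  simpa only [Finset.piecewise_univ] using key Finset.univ

theorem reflTransGen_binary (C : α → α → α)
    (hL : ∀ {x x' y}, R x x' → R (C x y) (C x' y))
    (hR : ∀ {x y y'}, R y y' → R (C x y) (C x y')) {x x' y y' : α}
    (hx : ReflTransGen R x x') (hy : ReflTransGen R y y') :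
    ReflTransGen R (C x y) (C x' y') :=
  (hx.lift (C · y) fun _ _ => hL).trans (hy.lift (C x') fun _ _ => hR)

theorem reflTransGen_upSub (hP : UpSubstClosed P) {σ σ' : ℕ → Tm}
    (h : ∀ n, ReflTransGen (StepT P) (σ n) (σ' n)) :
    ∀ n, ReflTransGen (StepT P) (upSub σ n) (upSub σ' n)
  | 0 => .refl
  | n + 1 => (h n).lift (renT Nat.succ) fun _ _ hs => hs.renT hP Nat.succ

mutual
theorem reflTransGen_subT (hP : UpSubstClosed P) {σ σ' : ℕ → Tm}
    (h : ∀ n, ReflTransGen (StepT P) (σ n) (σ' n)) :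
    ∀ t, ReflTransGen (StepT P) (subT σ t) (subT σ' t)
  | .var i => h i
  | .fn f k a =>
      reflTransGen_of_pointwise (Tm.fn f k) (fun _ _ _ => .fn)
        fun i => reflTransGen_subT hP h (a i)
  | .eps F => (reflTransGen_subF hP (reflTransGen_upSub hP h) F).lift Tm.eps fun _ _ => .eps
theorem reflTransGen_subF (hP : UpSubstClosed P) {σ σ' : ℕ → Tm}
    (h : ∀ n, ReflTransGen (StepT P) (σ n) (σ' n)) :
    ∀ F, ReflTransGen (StepF P) (subF σ F) (subF σ' F)
  | .pred p k a =>
      reflTransGen_of_pointwise (Fm.pred p k) (fun _ _ _ => .pred)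
        fun i => reflTransGen_subT hP h (a i)
  | .not F => (reflTransGen_subF hP h F).lift Fm.not fun _ _ => .not
  | .or F G => reflTransGen_binary Fm.or .orL .orR
      (reflTransGen_subF hP h F) (reflTransGen_subF hP h G)
  | .and F G => reflTransGen_binary Fm.and .andL .andR
      (reflTransGen_subF hP h F) (reflTransGen_subF hP h G)
  | .imp F G => reflTransGen_binary Fm.imp .impL .impR
      (reflTransGen_subF hP h F) (reflTransGen_subF hP h G)
  | .ex F => (reflTransGen_subF hP (reflTransGen_upSub hP h) F).lift Fm.ex fun _ _ => .ex
  | .all F => (reflTransGen_subF hP (reflTransGen_upSub hP h) F).lift Fm.all fun _ _ => .all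
end

theorem StepT.not_var {i : ℕ} {t : Tm} : ¬ StepT P (.var i) t := nofun

theorem StepT.inv_fn {f k : ℕ} {a : Fin k → Tm} {t : Tm} (h : StepT P (.fn f k a) t) :
    ∃ j t', StepT P (a j) t' ∧ t = .fn f k (update a j t') := by
  cases h with
  | fn hs => exact ⟨_, _, hs, rfl⟩

theorem StepT.inv_eps {F : Fm} {t : Tm} (h : StepT P (.eps F) t) :
    ∃ F', StepF P F F' ∧ t = .eps F' := by
  cases h with
  | eps hs => exact ⟨_, hs, rfl⟩

theorem StepF.inv_pred {p k : ℕ} {a : Fin k → Tm} {G : Fm} (h : StepF P (.pred p k a) G) :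
    ∃ j t', StepT P (a j) t' ∧ G = .pred p k (update a j t') := by
  generalize hX : Fm.pred p k a = X at h
  cases h with
  | root => cases ‹Quant› <;> cases hX
  | pred hs => cases hX; exact ⟨_, _, hs, rfl⟩
  | _ => cases hX

theorem StepF.inv_not {F G : Fm} (h : StepF P (.not F) G) :
    ∃ F', StepF P F F' ∧ G = .not F' := by
  generalize hX : Fm.not F = X at h
  cases h with
  | root => cases ‹Quant› <;> cases hX
  | not hs => cases hX; exact ⟨_, hs, rfl⟩
  | _ => cases hX

theorem StepF.inv_or {F G X : Fm} (h : StepF P (.or F G) X) :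
    (∃ F', StepF P F F' ∧ X = .or F' G) ∨ ∃ G', StepF P G G' ∧ X = .or F G' := by
  generalize hX : Fm.or F G = Y at h
  cases h with
  | root => cases ‹Quant› <;> cases hX
  | orL hs => cases hX; exact .inl ⟨_, hs, rfl⟩
  | orR hs => cases hX; exact .inr ⟨_, hs, rfl⟩
  | _ => cases hX

theorem StepF.inv_and {F G X : Fm} (h : StepF P (.and F G) X) :
    (∃ F', StepF P F F' ∧ X = .and F' G) ∨ ∃ G', StepF P G G' ∧ X = .and F G' := by
  generalize hX : Fm.and F G = Y at h
  cases h with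
  | root => cases ‹Quant› <;> cases hX
  | andL hs => cases hX; exact .inl ⟨_, hs, rfl⟩
  | andR hs => cases hX; exact .inr ⟨_, hs, rfl⟩
  | _ => cases hX

theorem StepF.inv_imp {F G X : Fm} (h : StepF P (.imp F G) X) :
    (∃ F', StepF P F F' ∧ X = .imp F' G) ∨ ∃ G', StepF P G G' ∧ X = .imp F G' := by
  generalize hX : Fm.imp F G = Y at h
  cases h with
  | root => cases ‹Quant› <;> cases hX
  | impL hs => cases hX; exact .inl ⟨_, hs, rfl⟩
  | impR hs => cases hX; exact .inr ⟨_, hs, rfl⟩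
  | _ => cases hX

theorem StepF.inv_mkQ {Q : Quant} {A G : Fm} (h : StepF P (mkQ Q A) G) :
    (P A ∧ G = qeRedex Q A) ∨ ∃ A', StepF P A A' ∧ G = mkQ Q A' := by
  generalize hX : mkQ Q A = Y at h
  cases h with
  | @root Q' _ hA =>
      cases Q <;> cases Q' <;> cases hX
      all_goals exact .inl ⟨hA, rfl⟩
  | ex hs => cases Q <;> cases hX; exact .inr ⟨_, hs, rfl⟩
  | all hs => cases Q <;> cases hX; exact .inr ⟨_, hs, rfl⟩
  | _ => cases Q <;> cases hX

/-- `A{x ↦ t} → A'{x ↦ t} →* A'{x ↦ t'}` for `t = εx. ¬^Q A → t' = εx. ¬^Q A'`: the second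
part needs one step per occurrence of `x` in `A'`. -/
theorem StepF.reflTransGen_qeRedex (hP : UpSubstClosed P) (Q : Quant) {A A' : Fm}
    (h : StepF P A A') : ReflTransGen (StepF P) (qeRedex Q A) (qeRedex Q A') := by
  have hε : StepT P (.eps (negQ Q A)) (.eps (negQ Q A')) := .eps (h.congr_negQ Q)
  refine .head (h.subF hP _) (reflTransGen_subF hP ?_ A')
  rintro (_ | n)
  exacts [.single hε, .refl]

theorem join_qeRedex_mkQ (hP : UpSubstClosed P) (hstep : ∀ {A A'}, P A → StepF P A A' → P A')
    {Q : Quant} {A A' : Fm} (hA : P A) (h : StepF P A A') :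
    Join (ReflTransGen (StepF P)) (qeRedex Q A) (mkQ Q A') :=
  ⟨qeRedex Q A', h.reflTransGen_qeRedex hP Q, .single (.root (hstep hA h))⟩

theorem join_mkQ (hP : UpSubstClosed P) (hstep : ∀ {A A'}, P A → StepF P A A' → P A')
    {Q : Quant} {A G₁ G₂ : Fm} (h₁ : StepF P (mkQ Q A) G₁) (h₂ : StepF P (mkQ Q A) G₂)
    (ih : ∀ {A₁ A₂}, StepF P A A₁ → StepF P A A₂ →
      Join (ReflTransGen (StepF P)) A₁ A₂) :
    Join (ReflTransGen (StepF P)) G₁ G₂ := by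
  rcases h₁.inv_mkQ with ⟨hA, rfl⟩ | ⟨A₁, hs₁, rfl⟩ <;>
    rcases h₂.inv_mkQ with ⟨hA, rfl⟩ | ⟨A₂, hs₂, rfl⟩
  · exact ⟨_, .refl, .refl⟩
  · exact join_qeRedex_mkQ hP hstep hA hs₂
  · exact symm (join_qeRedex_mkQ hP hstep hA hs₁)
  · obtain ⟨A₃, r₁, r₂⟩ := ih hs₁ hs₂
    exact ⟨mkQ Q A₃, r₁.lift _ fun _ _ => .congr_mkQ Q, r₂.lift _ fun _ _ => .congr_mkQ Q⟩

theorem join_update {k : ℕ} (C : (Fin k → Tm) → α)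
    (hC : ∀ c j t, StepT P (c j) t → R (C c) (C (update c j t))) (a : Fin k → Tm)
    {j₁ j₂ : Fin k} {t₁ t₂ : Tm} (h₁ : StepT P (a j₁) t₁)
    (h₂ : StepT P (a j₂) t₂)
    (ih : j₁ = j₂ → Join (ReflTransGen (StepT P)) t₁ t₂) :
    Join (ReflTransGen R) (C (update a j₁ t₁)) (C (update a j₂ t₂)) := by
  by_cases hj : j₁ = j₂
  · subst hj
    obtain ⟨t₃, r₁, r₂⟩ := ih rfl
    exact ⟨_, reflTransGen_update C hC a j₁ r₁, reflTransGen_update C hC a j₁ r₂⟩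
  · refine ⟨C (update (update a j₁ t₁) j₂ t₂), .single (hC _ _ _ ?_), ?_⟩
    · rwa [update_of_ne (Ne.symm hj)]
    · rw [update_comm hj]
      exact .single (hC _ _ _ (by rwa [update_of_ne hj]))

theorem join_binary (C : α → α → α)
    (hL : ∀ {x x' y}, R x x' → R (C x y) (C x' y))
    (hR : ∀ {x y y'}, R y y' → R (C x y) (C x y')) {x y z₁ z₂ : α}
    (h₁ : (∃ x', R x x' ∧ z₁ = C x' y) ∨ ∃ y', R y y' ∧ z₁ = C x y')
    (h₂ : (∃ x', R x x' ∧ z₂ = C x' y) ∨ ∃ y', R y y' ∧ z₂ = C x y')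
    (ihx : ∀ {x₁ x₂}, R x x₁ → R x x₂ → Join (ReflTransGen R) x₁ x₂)
    (ihy : ∀ {y₁ y₂}, R y y₁ → R y y₂ → Join (ReflTransGen R) y₁ y₂) :
    Join (ReflTransGen R) z₁ z₂ := by
  rcases h₁ with ⟨x₁, hs₁, rfl⟩ | ⟨y₁, hs₁, rfl⟩ <;>
    rcases h₂ with ⟨x₂, hs₂, rfl⟩ | ⟨y₂, hs₂, rfl⟩
  · obtain ⟨x₃, r₁, r₂⟩ := ihx hs₁ hs₂
    exact ⟨C x₃ y, reflTransGen_binary C hL hR r₁ .refl,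
      reflTransGen_binary C hL hR r₂ .refl⟩
  · exact ⟨C x₁ y₂, .single (hR hs₂), .single (hL hs₁)⟩
  · exact ⟨C x₂ y₁, .single (hL hs₂), .single (hR hs₁)⟩
  · obtain ⟨y₃, r₁, r₂⟩ := ihy hs₁ hs₂
    exact ⟨C x y₃, reflTransGen_binary C hL hR .refl r₁,
      reflTransGen_binary C hL hR .refl r₂⟩

mutual
theorem StepT.join_reflTransGen (hP : UpSubstClosed P)
    (hstep : ∀ {A A'}, P A → StepF P A A' → P A') :
    ∀ {t t₁ t₂ : Tm}, StepT P t t₁ → StepT P t t₂ →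
      Join (ReflTransGen (StepT P)) t₁ t₂
  | .var _, _, _, h₁, _ => absurd h₁ StepT.not_var
  | .fn f k a, _, _, h₁, h₂ => by
      obtain ⟨j₁, t₁, hs₁, rfl⟩ := h₁.inv_fn
      obtain ⟨j₂, t₂, hs₂, rfl⟩ := h₂.inv_fn
      refine join_update (Tm.fn f k) (fun _ _ _ => .fn) a hs₁ hs₂ fun hj => ?_
      subst hj
      exact StepT.join_reflTransGen hP hstep hs₁ hs₂
  | .eps F, _, _, h₁, h₂ => by
      obtain ⟨F₁, hs₁, rfl⟩ := h₁.inv_eps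
      obtain ⟨F₂, hs₂, rfl⟩ := h₂.inv_eps
      obtain ⟨F₃, r₁, r₂⟩ := StepF.join_reflTransGen hP hstep hs₁ hs₂
      exact ⟨.eps F₃, r₁.lift _ fun _ _ => .eps, r₂.lift _ fun _ _ => .eps⟩
theorem StepF.join_reflTransGen (hP : UpSubstClosed P)
    (hstep : ∀ {A A'}, P A → StepF P A A' → P A') :
    ∀ {F F₁ F₂ : Fm}, StepF P F F₁ → StepF P F F₂ →
      Join (ReflTransGen (StepF P)) F₁ F₂
  | .pred p k a, _, _, h₁, h₂ => by
      obtain ⟨j₁, t₁, hs₁, rfl⟩ := h₁.inv_pred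
      obtain ⟨j₂, t₂, hs₂, rfl⟩ := h₂.inv_pred
      refine join_update (Fm.pred p k) (fun _ _ _ => .pred) a hs₁ hs₂ fun hj => ?_
      subst hj
      exact StepT.join_reflTransGen hP hstep hs₁ hs₂
  | .not F, _, _, h₁, h₂ => by
      obtain ⟨F₁, hs₁, rfl⟩ := h₁.inv_not
      obtain ⟨F₂, hs₂, rfl⟩ := h₂.inv_not
      obtain ⟨F₃, r₁, r₂⟩ := StepF.join_reflTransGen hP hstep hs₁ hs₂
      exact ⟨.not F₃, r₁.lift _ fun _ _ => .not, r₂.lift _ fun _ _ => .not⟩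
  | .or F G, _, _, h₁, h₂ => join_binary Fm.or .orL .orR h₁.inv_or h₂.inv_or
      (StepF.join_reflTransGen hP hstep) (StepF.join_reflTransGen hP hstep)
  | .and F G, _, _, h₁, h₂ => join_binary Fm.and .andL .andR h₁.inv_and h₂.inv_and
      (StepF.join_reflTransGen hP hstep) (StepF.join_reflTransGen hP hstep)
  | .imp F G, _, _, h₁, h₂ => join_binary Fm.imp .impL .impR h₁.inv_imp h₂.inv_imp
      (StepF.join_reflTransGen hP hstep) (StepF.join_reflTransGen hP hstep)
  | .ex A, _, _, h₁, h₂ =>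
      join_mkQ (Q := .ex) hP hstep h₁ h₂ (StepF.join_reflTransGen hP hstep)
  | .all A, _, _, h₁, h₂ =>
      join_mkQ (Q := .all) hP hstep h₁ h₂ (StepF.join_reflTransGen hP hstep)
end

end Steps

/-- Corollary: the quantifier-elimination rewrite relation is
locally confluent. -/
theorem stmt7 : ∀ F₀ F₁ F₂ : Fm, Step F₀ F₁ → Step F₀ F₂ →
    ∃ F₃ : Fm, Relation.ReflTransGen Step F₁ F₃ ∧ Relation.ReflTransGen Step F₂ F₃ :=
  fun _ _ _ => StepF.join_reflTransGen (fun _ _ _ => trivial) (fun _ _ => trivial)
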